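/- Let q ≥ 3 be an odd integer and n ≥ 1 an integer, and suppose S = (s_i) is an orientable sequence of order n and odd period m over ℤ_q. Then A^{-1}(S) consists of one orientable sequence of order n+1 and period m, together with two shifts of each of (q−1)/2 orientable sequences of order n+1 and period 2m which are alternating sign translates of one another. -/

import Mathlib

namespace OSeq

variable {q : ℕ}

/-- The `n`-tuple (window) of the sequence `s` at position `i`. -/
def window (s : ℤ → ZMod q) (n : ℕ) (i : ℤ) : Fin n → ZMod q :=
  fun k => s (i + (k : ℕ))

/-- The reverse of an `n`-tuple. -/
def tupRev {n : ℕ} (u : Fin n → ZMod q) : Fin n → ZMod q :=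
  fun k => u k.rev

/-- `m` is the (least) period of the periodic sequence `s`. -/
def IsPeriod (s : ℤ → ZMod q) (m : ℕ) : Prop :=
  0 < m ∧ (∀ i : ℤ, s (i + (m : ℤ)) = s i) ∧
    ∀ m' : ℕ, 0 < m' → (∀ i : ℤ, s (i + (m' : ℤ)) = s i) → m ≤ m'

/-- `s` is an `n`-window sequence of period `m`. -/
def IsNWindowSeq (s : ℤ → ZMod q) (n m : ℕ) : Prop :=
  IsPeriod s m ∧ ∀ i j : ℤ, window s n i = window s n j → i ≡ j [ZMOD (m : ℤ)]

/-- `s` is an orientable sequence of order `n` and period `m`. -/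
def IsOS (s : ℤ → ZMod q) (n m : ℕ) : Prop :=
  IsNWindowSeq s n m ∧ ∀ i j : ℤ, window s n i ≠ tupRev (window s n j)

/-- `s` is a negative orientable sequence of order `n` and period `m`. -/
def IsNOS (s : ℤ → ZMod q) (n m : ℕ) : Prop :=
  IsNWindowSeq s n m ∧ ∀ i j : ℤ, window s n i ≠ - tupRev (window s n j)

/-- `s` is a special orientable sequence of order `n` and period `m`:
orientable and also negative orientable. -/
def IsSpecialOS (s : ℤ → ZMod q) (n m : ℕ) : Prop :=
  IsOS s n m ∧ ∀ i j : ℤ, window s n i ≠ - tupRev (window s n j)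

/-- The weight modulo `q` of one period of `s`. -/
def wq (s : ℤ → ZMod q) (m : ℕ) : ZMod q :=
  ∑ i ∈ Finset.range m, s (i : ℤ)

/-- The alternating sign weight modulo `q` of one period of `s`. -/
def wqA (s : ℤ → ZMod q) (m : ℕ) : ZMod q :=
  ∑ i ∈ Finset.range m, (-1 : ZMod q) ^ (m - 1 - i) * s (i : ℤ)

/-- The Lempel homomorphism `D` on sequences. -/
def D (t : ℤ → ZMod q) : ℤ → ZMod q := fun j => t (j + 1) - t j

/-- The homomorphism `A` on sequences. -/
def A (t : ℤ → ZMod q) : ℤ → ZMod q := fun j => t (j + 1) + t j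

/-- Shift of a sequence by `c`. -/
def shift (t : ℤ → ZMod q) (c : ℤ) : ℤ → ZMod q := fun i => t (i + c)

/-- `t'` is a translate of `t`. -/
def IsTranslate (t t' : ℤ → ZMod q) : Prop := ∃ c : ZMod q, ∀ i : ℤ, t' i = t i + c

/-- `t'` is an alternating sign translate of `t`. -/
def IsAltTranslate (t t' : ℤ → ZMod q) : Prop :=
  ∃ c : ZMod q, ∀ i : ℤ, t' i = t i + (if i % 2 = 0 then c else -c)

/-- Two sequences are (`n`-window) disjoint. -/
def WindowDisjoint (n : ℕ) (s t : ℤ → ZMod q) : Prop :=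
  ∀ i j : ℤ, window s n i ≠ window t n j

/-- Orientable-disjoint. -/
def ODisjoint (n : ℕ) (s t : ℤ → ZMod q) : Prop :=
  WindowDisjoint n s t ∧ ∀ i j : ℤ, window s n i ≠ tupRev (window t n j)

/-- Negative orientable-disjoint (no-disjoint). -/
def NODisjoint (n : ℕ) (s t : ℤ → ZMod q) : Prop :=
  WindowDisjoint n s t ∧ ∀ i j : ℤ, window s n i ≠ - tupRev (window t n j)

/-- Special-orientable-disjoint. -/
def SpecialODisjoint (n : ℕ) (s t : ℤ → ZMod q) : Prop :=
  ODisjoint n s t ∧ ∀ i j : ℤ, window s n i ≠ - tupRev (window t n j)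

/-- The string `a^t` appears in `s`. -/
def HasString (s : ℤ → ZMod q) (a : ZMod q) (t : ℕ) : Prop :=
  ∃ j : ℤ, ∀ k : ℕ, k < t → s (j + (k : ℤ)) = a

/-- There is a run `a^t` of `a` in `s` starting at position `j`. -/
def IsRunAt (s : ℤ → ZMod q) (a : ZMod q) (j : ℤ) (t : ℕ) : Prop :=
  (∀ k : ℕ, k < t → s (j + (k : ℤ)) = a) ∧ s (j - 1) ≠ a ∧ s (j + (t : ℤ)) ≠ a

/-- `a^t` is a maximal run of `a` in `s`: the string `a^t` appears and every
string `a^{t'}` appearing in `s` has `t' ≤ t`. -/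
def IsMaxRun (s : ℤ → ZMod q) (a : ZMod q) (t : ℕ) : Prop :=
  HasString s a t ∧ ∀ t' : ℕ, HasString s a t' → t' ≤ t

/-- `k`-th entry of the alternating string `a, -a, a, -a, ...`. -/
def altVal (a : ZMod q) (k : ℕ) : ZMod q := if k % 2 = 0 then a else -a

/-- The signed string `ạ^t` (alternating `a, -a, ...`) appears in `s`. -/
def HasSignedString (s : ℤ → ZMod q) (a : ZMod q) (t : ℕ) : Prop :=
  ∃ j : ℤ, ∀ k : ℕ, k < t → s (j + (k : ℤ)) = altVal a k

/-- There is a signed run `ạ^t` of `a` in `s` starting at position `j`. -/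
def IsSignedRunAt (s : ℤ → ZMod q) (a : ZMod q) (j : ℤ) (t : ℕ) : Prop :=
  (∀ k : ℕ, k < t → s (j + (k : ℤ)) = altVal a k) ∧
    s (j - 1) ≠ -a ∧ s (j + (t : ℤ)) ≠ altVal a t

/-- `ạ^t` is a maximal signed run of `a` in `s`. -/
def IsMaxSignedRun (s : ℤ → ZMod q) (a : ZMod q) (t : ℕ) : Prop :=
  HasSignedString s a t ∧ ∀ t' : ℕ, HasSignedString s a t' → t' ≤ t

/-- The sequence obtained from the ring sequence `[s_0,...,s_{m-1}]` of `s` by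
inserting one extra symbol `a` at ring position `r`, i.e. with ring sequence
`[s_0,...,s_{r-1}, a, s_r, ..., s_{m-1}]` of length `m+1`. -/
def insert1 (s : ℤ → ZMod q) (m r : ℕ) (a : ZMod q) : ℤ → ZMod q :=
  fun j =>
    let j' := (j % ((m : ℤ) + 1)).toNat
    if j' < r then s (j' : ℤ) else if j' = r then a else s ((j' : ℤ) - 1)

/-- The sequence obtained from the ring sequence `[s_0,...,s_{m-1}]` of `s` by
inserting the two symbols `a, -a` at ring position `r`, i.e. with ring sequence
`[s_0,...,s_{r-1}, a, -a, s_r, ..., s_{m-1}]` of length `m+2`. -/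
def insert2 (s : ℤ → ZMod q) (m r : ℕ) (a : ZMod q) : ℤ → ZMod q :=
  fun j =>
    let j' := (j % ((m : ℤ) + 2)).toNat
    if j' < r then s (j' : ℤ)
    else if j' = r then a
    else if j' = r + 1 then -a
    else s ((j' : ℤ) - 2)

/-- The operation `E_a` (with the convention `E_0(S) = S`). -/
def Emod (s : ℤ → ZMod q) (m r : ℕ) (a : ZMod q) : ℤ → ZMod q :=
  if a = 0 then s else insert1 s m r a

/-- A sequence is good (for order `n`) if every run of `0` has length at most `n-2`. -/
def GoodSeq (s : ℤ → ZMod q) (n : ℕ) : Prop :=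
  ∀ t : ℕ, HasString s 0 t → t ≤ n - 2

/-- A tuple is uniform if it is constant. -/
def Uniform {n : ℕ} (u : Fin n → ZMod q) : Prop := ∃ c : ZMod q, ∀ i, u i = c

/-- A tuple is symmetric if it equals its own reverse. -/
def Symm {n : ℕ} (u : Fin n → ZMod q) : Prop := ∀ i : Fin n, u i = u i.rev

/-- An `n`-tuple is `m`-symmetric (`m ≤ n`) if `u_i = u_{m-1-i}` for `0 ≤ i ≤ m-1`. -/
def MSymm {n : ℕ} (u : Fin n → ZMod q) (m : ℕ) (hm : m ≤ n) : Prop :=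
  ∀ i : Fin m, u (Fin.castLE hm i) = u (Fin.castLE hm i.rev)

/-- An `n`-tuple (`n ≥ 2`) is alternating. -/
def Alternating {n : ℕ} (hn : 2 ≤ n) (u : Fin n → ZMod q) : Prop :=
  u ⟨0, by omega⟩ ≠ u ⟨1, by omega⟩ ∧
    ∀ i : Fin n, u i = if (i : ℕ) % 2 = 0 then u ⟨0, by omega⟩ else u ⟨1, by omega⟩

/-- `L_n(v)`: the set of `n`-tuples whose first `n-r` entries agree with the
`(n-r)`-tuple `v`. -/
def Lset (n r : ℕ) (v : Fin (n - r) → ZMod q) : Set (Fin n → ZMod q) :=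
  {u | ∀ i : Fin (n - r), u (Fin.castLE (Nat.sub_le n r) i) = v i}

/-- The `n`-tuple `u` appears in the sequence `s`. -/
def AppearsIn (s : ℤ → ZMod q) (n : ℕ) (u : Fin n → ZMod q) : Prop :=
  ∃ i : ℤ, window s n i = u

end OSeq

/-!
`A` is additive and its kernel consists of the alternating sequences `(-1)^i λ`, so `A⁻¹(S)` is
the coset `T₀ + {(-1)^i λ}` of any preimage `T₀`. As `m` is odd and `2` is invertible modulo
`q`, there is an `m`-periodic preimage `T₀`, and shifting `T₀ + (-1)^i λ` by `m` gives
`T₀ - (-1)^i λ`. Hence for `λ ≠ 0` the period is `2m`, and the `q - 1` nonzero values of `λ`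
pair up as `±λ`. `A` maps the `(n+1)`-windows of a preimage to the `n`-windows of `S`,
compatibly with reversal, so the window and orientability properties of `S` lift; for `λ ≠ 0`
two windows at positions an odd multiple of `m` apart differ in their first entry.
-/

theorem ZMod.eq_zero_of_neg_eq_self_of_odd {q : ℕ} (hq : Odd q) {x : ZMod q} (h : -x = x) :
    x = 0 := by
  rcases (ZMod.neg_eq_self_iff x).mp h with hx | hx
  · exact hx
  · exact absurd ⟨x.val, by omega⟩ (Nat.not_even_iff_odd.mpr hq)

theorem ZMod.natCast_ne_zero_of_pos_of_lt {q a : ℕ} (ha : 0 < a) (haq : a < q) :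
    (a : ZMod q) ≠ 0 := by
  rw [Ne, ZMod.natCast_eq_zero_iff]
  exact fun h => absurd (Nat.le_of_dvd ha h) (not_le.mpr haq)

theorem ZMod.natCast_inj_of_lt {q a b : ℕ} (ha : a < q) (hb : b < q) :
    (a : ZMod q) = b ↔ a = b := by
  rw [ZMod.natCast_eq_natCast_iff', Nat.mod_eq_of_lt ha, Nat.mod_eq_of_lt hb]

namespace OSeq

open Function Finset

variable {q : ℕ}

lemma A_add (t u : ℤ → ZMod q) : A (t + u) = A t + A u := by
  funext j; simp only [A, Pi.add_apply]; ring

lemma A_sub (t u : ℤ → ZMod q) : A (t - u) = A t - A u := by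
  funext j; simp only [A, Pi.sub_apply]; ring

lemma A_eq_zero_iff {u : ℤ → ZMod q} : A u = 0 ↔ Antiperiodic u 1 := by
  simp only [funext_iff, A, Pi.zero_apply, Antiperiodic, add_eq_zero_iff_eq_neg]

lemma A_periodic {t : ℤ → ZMod q} {c : ℤ} (h : Periodic t c) : Periodic (A t) c := by
  intro j; simp only [A, add_right_comm j c, h _]

def altSign (c : ZMod q) : ℤ → ZMod q := fun i => if i % 2 = 0 then c else -c

lemma altSign_apply (c : ZMod q) (i : ℤ) : altSign c i = (i.negOnePow : ℤ) • c := by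
  rcases Int.even_or_odd i with hi | hi
  · simp [altSign, Int.even_iff.mp hi, Int.negOnePow_even _ hi]
  · simp [altSign, Int.odd_iff.mp hi, Int.negOnePow_odd _ hi]

lemma altSign_apply_zero (c : ZMod q) : altSign c 0 = c := rfl

lemma altSign_apply_eq_zero {c : ZMod q} {i : ℤ} : altSign c i = 0 ↔ c = 0 := by
  simp only [altSign]; split_ifs <;> simp

lemma altSign_injective : Injective (altSign (q := q)) :=
  fun c d h => by simpa only [altSign_apply_zero] using congrFun h 0

lemma altSign_zero : altSign (0 : ZMod q) = 0 := by
  funext i; simp [altSign_apply]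

lemma altSign_neg (c : ZMod q) : altSign (-c) = -altSign c := by
  funext i; simp only [altSign, Pi.neg_apply]; split_ifs <;> rfl

lemma altSign_add_of_even {k : ℤ} (hk : Even k) (c : ZMod q) (i : ℤ) :
    altSign c (i + k) = altSign c i := by
  simp only [altSign_apply, Int.negOnePow_add, Int.negOnePow_even _ hk, mul_one]

lemma altSign_add_of_odd {k : ℤ} (hk : Odd k) (c : ZMod q) (i : ℤ) :
    altSign c (i + k) = -altSign c i := by
  simp only [altSign_apply, Int.negOnePow_add, Int.negOnePow_odd _ hk, mul_neg, mul_one,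
    Units.val_neg, neg_smul]

lemma altSign_antiperiodic (c : ZMod q) : Antiperiodic (altSign c) 1 :=
  fun i => altSign_add_of_odd odd_one c i

lemma eq_altSign_of_antiperiodic {u : ℤ → ZMod q} (h : Antiperiodic u 1) :
    u = altSign (u 0) := by
  funext i
  rw [altSign_apply]
  simpa only [zero_add, smul_eq_mul, mul_one] using h.add_zsmul_eq (x := 0) i

lemma isAltTranslate_add_altSign (t : ℤ → ZMod q) (c d : ZMod q) :
    IsAltTranslate (t + altSign c) (t + altSign d) :=
  ⟨d - c, fun i => show _ = _ + altSign (d - c) i by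
    simp only [Pi.add_apply, altSign_apply, smul_sub]; ring⟩

lemma A_add_altSign (t : ℤ → ZMod q) (c : ZMod q) : A (t + altSign c) = A t := by
  rw [A_add, A_eq_zero_iff.mpr (altSign_antiperiodic c), add_zero]

lemma A_eq_iff_exists_altSign {s t₀ t : ℤ → ZMod q} (h₀ : A t₀ = s) :
    A t = s ↔ ∃ c, t = t₀ + altSign c := by
  refine ⟨fun ht => ⟨(t - t₀) 0, ?_⟩,
    fun ⟨c, htc⟩ => by rw [htc, A_add_altSign, h₀]⟩
  have hker : A (t - t₀) = 0 := by rw [A_sub, ht, h₀, sub_self]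
  rw [← eq_altSign_of_antiperiodic (A_eq_zero_iff.mp hker), add_sub_cancel]

def signedRep : Fin ((q - 1) / 2) × Fin 2 → ZMod q :=
  fun p => (-1) ^ (p.2 : ℕ) * ((p.1 + 1 : ℕ) : ZMod q)

lemma signedRep_ne_zero (p : Fin ((q - 1) / 2) × Fin 2) : signedRep p ≠ 0 := by
  rw [signedRep, Ne, (isUnit_neg_one.pow _).mul_right_eq_zero]
  exact ZMod.natCast_ne_zero_of_pos_of_lt (Nat.succ_pos _) (by omega)

lemma signedRep_injective : Injective (signedRep (q := q)) := by
  rintro ⟨k, a⟩ ⟨l, b⟩ h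
  have hk := k.isLt
  have hl := l.isLt
  have hcast (h : ((k + 1 : ℕ) : ZMod q) = (l + 1 : ℕ)) : k = l :=
    Fin.ext (by simpa using (ZMod.natCast_inj_of_lt (by omega) (by omega)).mp h)
  have hsum : ((k + 1 + (l + 1) : ℕ) : ZMod q) ≠ 0 :=
    ZMod.natCast_ne_zero_of_pos_of_lt (by omega) (by omega)
  fin_cases a <;> fin_cases b <;>
    simp only [signedRep, pow_zero, pow_one, one_mul, neg_one_mul, neg_inj] at h
  · rw [hcast h]
  · exact absurd (by push_cast at h ⊢; linear_combination h) hsum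
  · exact absurd (by push_cast at h ⊢; linear_combination -h) hsum
  · rw [hcast h]

lemma exists_signedRep_eq (hq : Odd q) {c : ZMod q} (hc : c ≠ 0) : ∃ p, signedRep p = c := by
  have : NeZero q := ⟨hq.pos.ne'⟩
  let f : Fin ((q - 1) / 2) × Fin 2 → {c : ZMod q // c ≠ 0} :=
    fun p => ⟨_, signedRep_ne_zero p⟩
  have hf : Bijective f := by
    refine (Fintype.bijective_iff_injective_and_card f).mpr
      ⟨fun p p' h => signedRep_injective (congrArg Subtype.val h), ?_⟩
    simp only [Fintype.card_prod, Fintype.card_fin, Fintype.card_subtype_compl, ZMod.card,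
      Fintype.card_unique]
    obtain ⟨r, rfl⟩ := hq
    omega
  obtain ⟨p, hp⟩ := hf.2 ⟨c, hc⟩
  exact ⟨p, congrArg Subtype.val hp⟩

lemma A_eq_iff_signedRep (hq : Odd q) {s t₀ t : ℤ → ZMod q} (h₀ : A t₀ = s) :
    A t = s ↔ t = t₀ ∨ ∃ k α, t = t₀ + altSign (signedRep (k, α)) := by
  rw [A_eq_iff_exists_altSign h₀]
  constructor
  · rintro ⟨c, rfl⟩
    by_cases hc : c = 0
    · exact Or.inl (by rw [hc, altSign_zero, add_zero])
    · obtain ⟨⟨k, α⟩, rfl⟩ := exists_signedRep_eq hq hc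
      exact Or.inr ⟨k, α, rfl⟩
  · rintro (rfl | ⟨k, α, rfl⟩)
    · exact ⟨0, by rw [altSign_zero, add_zero]⟩
    · exact ⟨_, rfl⟩

lemma alternating_sum_succ_add (s : ℤ → ZMod q) (j : ℤ) (m : ℕ) :
    ∑ k ∈ range m, (-1) ^ k * s (j + 1 + k) + ∑ k ∈ range m, (-1) ^ k * s (j + k) =
      s j - (-1) ^ m * s (j + m) := by
  induction m with
  | zero => simp
  | succ m ih =>
    have e : j + 1 + (m : ℤ) = j + (m + 1 : ℕ) := by push_cast; ring
    rw [sum_range_succ, sum_range_succ, pow_succ, e]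
    linear_combination ih

/-- Every preimage `t` of an `m`-periodic `s`, `m` odd, satisfies
`t j + t (j + m) = ∑ k < m, (-1)^k s (j + k)`, so an `m`-periodic one is half this sum. -/
def periodicPreimage (s : ℤ → ZMod q) (m : ℕ) : ℤ → ZMod q :=
  fun j => (2 : ZMod q)⁻¹ * ∑ k ∈ range m, (-1) ^ k * s (j + k)

lemma periodicPreimage_periodic {s : ℤ → ZMod q} {m : ℕ} (hs : Periodic s m) :
    Periodic (periodicPreimage s m) m := by
  intro j; simp only [periodicPreimage, add_right_comm j (m : ℤ), hs _]

lemma A_periodicPreimage (hq : Odd q) {s : ℤ → ZMod q} {m : ℕ} (hs : Periodic s m)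
    (hm : Odd m) : A (periodicPreimage s m) = s := by
  funext j
  have h2 : (2 : ZMod q)⁻¹ * 2 = 1 := by
    rw [mul_comm]; exact_mod_cast ZMod.coe_mul_inv_eq_one 2 (Nat.coprime_two_left.mpr hq)
  simp only [A, periodicPreimage, ← mul_add, alternating_sum_succ_add, hs j, hm.neg_one_pow]
  linear_combination (s j) * h2

def tupA {n : ℕ} (u : Fin (n + 1) → ZMod q) : Fin n → ZMod q :=
  fun k => u k.succ + u k.castSucc

lemma window_A (t : ℤ → ZMod q) (n : ℕ) (i : ℤ) :
    window (A t) n i = tupA (window t (n + 1) i) := by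
  funext k
  simp only [window, tupA, A, Fin.val_succ, Fin.val_castSucc]
  push_cast; ring_nf

lemma tupA_tupRev {n : ℕ} (u : Fin (n + 1) → ZMod q) : tupA (tupRev u) = tupRev (tupA u) := by
  funext k
  simp only [tupA, tupRev]
  rw [add_comm]
  congr 2 <;> ext <;> simp only [Fin.val_rev, Fin.val_succ, Fin.val_castSucc] <;> omega

lemma IsPeriod.dvd_of_periodic {s : ℤ → ZMod q} {m p : ℕ} (hs : IsPeriod s m)
    (hp : Periodic s p) : m ∣ p := by
  obtain ⟨hm, hsm, hmin⟩ := hs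
  by_contra hdvd
  have hpos : 0 < p % m := Nat.pos_of_ne_zero (fun h => hdvd (Nat.dvd_of_mod_eq_zero h))
  have hrem : Periodic s (p % m : ℕ) := by
    have := hp.sub_period (Periodic.nat_mul hsm (p / m))
    rwa [← Nat.cast_mul, ← Nat.cast_sub (Nat.div_mul_le_self p m), ← Nat.mod_eq_sub_div_mul]
      at this
  exact absurd (hmin _ hpos hrem) (not_le.mpr (Nat.mod_lt p hm))

lemma IsPeriod.of_A_eq {s t : ℤ → ZMod q} {m : ℕ} (hs : IsPeriod s m) (ht : A t = s)
    (htm : Periodic t m) : IsPeriod t m :=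
  ⟨hs.1, htm, fun p hp hper => hs.2.2 p hp (ht ▸ A_periodic hper)⟩

lemma IsOS.succ_of_A_eq {s t : ℤ → ZMod q} {n m p : ℕ} (hs : IsOS s n m) (ht : A t = s)
    (hp : IsPeriod t p) (hmod : ∀ i j, t i = t j → i ≡ j [ZMOD m] → i ≡ j [ZMOD p]) :
    IsOS t (n + 1) p := by
  refine ⟨⟨hp, fun i j h => hmod i j ?_ (hs.1.2 i j ?_)⟩, fun i j h => hs.2 i j ?_⟩
  · simpa only [window, Fin.val_zero, Nat.cast_zero, add_zero] using congrFun h 0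
  · rw [← ht, window_A, window_A, h]
  · rw [← ht, window_A, window_A, h, tupA_tupRev]

section OddPeriod

variable {T : ℤ → ZMod q} {m : ℕ}

lemma shift_add_altSign (hT : Periodic T m) (hm : Odd m) (c : ZMod q) :
    shift (T + altSign c) m = T + altSign (-c) := by
  funext i
  simp only [shift, Pi.add_apply, hT i, altSign_neg, Pi.neg_apply,
    altSign_add_of_odd (Int.odd_coe_nat m |>.mpr hm)]

lemma modEq_two_mul_of_add_altSign (hq : Odd q) (hT : Periodic T m) (hm : Odd m) {c : ZMod q}
    (hc : c ≠ 0) {i j : ℤ} (hij : i ≡ j [ZMOD m])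
    (h : (T + altSign c) i = (T + altSign c) j) :
    i ≡ j [ZMOD (2 * m : ℕ)] := by
  obtain ⟨k, hk⟩ := Int.modEq_iff_dvd.mp hij
  have hTk : T (i + k * m) = T i := by simpa only [Int.cast_id] using hT.int_mul k i
  rw [show j = i + k * m by linear_combination hk, Pi.add_apply, Pi.add_apply, hTk] at h
  obtain ⟨l, rfl⟩ : Even k := by
    by_contra hodd
    rw [add_right_inj,
      altSign_add_of_odd ((Int.not_even_iff_odd.mp hodd).mul (Int.odd_coe_nat m |>.mpr hm))] at h
    exact hc (altSign_apply_eq_zero.mp (ZMod.eq_zero_of_neg_eq_self_of_odd hq h.symm))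
  exact Int.modEq_iff_dvd.mpr ⟨l, by push_cast; linear_combination hk⟩

lemma isPeriod_add_altSign (hq : Odd q) {s : ℤ → ZMod q} (hs : IsPeriod s m) (hT : A T = s)
    (hTm : Periodic T m) (hm : Odd m) {c : ZMod q} (hc : c ≠ 0) :
    IsPeriod (T + altSign c) (2 * m) := by
  refine ⟨by linarith [hs.1], fun i => ?_, fun p hp hper => ?_⟩
  · have hT2 := hTm.nat_mul 2 i
    push_cast at hT2 ⊢
    rw [Pi.add_apply, Pi.add_apply, hT2, altSign_add_of_even (even_two_mul _)]
  · have hmp : m ∣ p := by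
      have := A_periodic hper
      rw [A_add_altSign, hT] at this
      exact hs.dvd_of_periodic this
    have h2mp := modEq_two_mul_of_add_altSign hq hTm hm hc (i := 0) (j := p)
      (Int.modEq_zero_iff_dvd.mpr (Int.natCast_dvd_natCast.mpr hmp)).symm
      (by rw [← hper 0, zero_add])
    exact Nat.le_of_dvd hp (Int.natCast_dvd_natCast.mp (by simpa using h2mp.dvd))

end OddPeriod

end OSeq

open OSeq
theorem Ainv_of_orientable_odd_period_general {q n m : ℕ} (hqodd : Odd q)
    (s : ℤ → ZMod q) (hS : IsOS s n m) (hm : Odd m) :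
    ∃ (T₀ : ℤ → ZMod q) (F : Fin ((q - 1) / 2) → ℤ → ZMod q),
      A T₀ = s ∧ IsOS T₀ (n + 1) m ∧
      (∀ k, A (F k) = s ∧ IsOS (F k) (n + 1) (2 * m)) ∧
      (∀ k k', IsAltTranslate (F k) (F k')) ∧
      (∀ t : ℤ → ZMod q, A t = s ↔
        (t = T₀ ∨ ∃ (k : Fin ((q - 1) / 2)) (α : Fin 2),
          t = shift (F k) ((α : ℕ) * (m : ℤ)))) ∧
      (∀ (k : Fin ((q - 1) / 2)) (α : Fin 2), shift (F k) ((α : ℕ) * (m : ℤ)) ≠ T₀) ∧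
      Function.Injective
        (fun p : Fin ((q - 1) / 2) × Fin 2 => shift (F p.1) ((p.2 : ℕ) * (m : ℤ))) := by
  have hs : Function.Periodic s m := hS.1.1.2.1
  set T₀ := periodicPreimage s m
  have hT₀ : A T₀ = s := A_periodicPreimage hqodd hs hm
  have hT₀m : Function.Periodic T₀ m := periodicPreimage_periodic hs
  have hF (c : ZMod q) : A (T₀ + altSign c) = s := (A_add_altSign T₀ c).trans hT₀
  have hshift (k : Fin ((q - 1) / 2)) (α : Fin 2) :
      shift (T₀ + altSign (signedRep (k, 0))) ((α : ℕ) * (m : ℤ)) =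
        T₀ + altSign (signedRep (k, α)) := by
    fin_cases α
    · funext i; simp [shift]
    · simp [shift_add_altSign hT₀m hm, signedRep]
  refine ⟨T₀, fun k => T₀ + altSign (signedRep (k, 0)), hT₀,
    hS.succ_of_A_eq hT₀ (hS.1.1.of_A_eq hT₀ hT₀m) fun _ _ _ h => h,
    fun k => ⟨hF _, hS.succ_of_A_eq (hF _)
      (isPeriod_add_altSign hqodd hS.1.1 hT₀ hT₀m hm (signedRep_ne_zero _)) fun _ _ h hij => by
        exact_mod_cast modEq_two_mul_of_add_altSign hqodd hT₀m hm (signedRep_ne_zero _) hij h⟩,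
    fun k k' => isAltTranslate_add_altSign _ _ _,
    fun t => by simpa only [hshift] using A_eq_iff_signedRep hqodd hT₀,
    fun k α h => signedRep_ne_zero (k, α) (altSign_injective ?_),
    fun ⟨k, α⟩ ⟨k', α'⟩ h =>
      signedRep_injective (altSign_injective (add_left_cancel (a := T₀) ?_))⟩
  · rw [altSign_zero]
    exact add_eq_left.mp ((hshift k α).symm.trans h)
  · simpa only [hshift] using h

/-- If `q ≥ 3` is odd and `S` is an orientable sequence of order `n` and odd
period `m` over `ℤ_q`, then `A⁻¹(S)` consists of one orientable sequence of order
`n+1` and period `m`, together with two shifts of each of `(q-1)/2` orientable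
sequences of order `n+1` and period `2m` which are alternating sign translates
of one another. -/
theorem Ainv_of_orientable_odd_period {q n m : ℕ} (hq : 3 ≤ q) (hqodd : Odd q)
    (hn : 1 ≤ n) (s : ℤ → ZMod q) (hS : IsOS s n m) (hm : Odd m) :
    ∃ (T₀ : ℤ → ZMod q) (F : Fin ((q - 1) / 2) → ℤ → ZMod q),
      A T₀ = s ∧ IsOS T₀ (n + 1) m ∧
      (∀ k, A (F k) = s ∧ IsOS (F k) (n + 1) (2 * m)) ∧
      (∀ k k', IsAltTranslate (F k) (F k')) ∧
      (∀ t : ℤ → ZMod q, A t = s ↔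
        (t = T₀ ∨ ∃ (k : Fin ((q - 1) / 2)) (α : Fin 2),
          t = shift (F k) ((α : ℕ) * (m : ℤ)))) ∧
      (∀ (k : Fin ((q - 1) / 2)) (α : Fin 2), shift (F k) ((α : ℕ) * (m : ℤ)) ≠ T₀) ∧
      Function.Injective
        (fun p : Fin ((q - 1) / 2) × Fin 2 => shift (F p.1) ((p.2 : ℕ) * (m : ℤ))) :=
  Ainv_of_orientable_odd_period_general hqodd s hS hm
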